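/- Consider the planar vector field F(w₁, w₂) := ( 2w₁ (1 − 4w₂ − (8π/3) w₁) / (1 − 2w₂), 4π w₁ − w₂ ), defined for w₂ < 1/2. There is no nonconstant periodic orbit of the system w′ = F(w) contained in the open quadrant strip (0,∞) × (0, 1/2): if w : ℝ → (0,∞) × (0,1/2) is differentiable with w′(τ) = F(w(τ)) for all τ ∈ ℝ and w(τ + T) = w(τ) for some T > 0 and all τ ∈ ℝ, then w is constant. -/
import Mathlib


noncomputable section

/-- The planar vector field
`F(w₁, w₂) = ( 2w₁(1 − 4w₂ − (8π/3)w₁)/(1 − 2w₂), 4πw₁ − w₂ )`. -/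
def dulacF (w : ℝ × ℝ) : ℝ × ℝ :=
  (2 * w.1 * (1 - 4 * w.2 - 8 * Real.pi / 3 * w.1) / (1 - 2 * w.2),
    4 * Real.pi * w.1 - w.2)

/-- The system `w′ = F(w)` has no nonconstant periodic orbit contained in the
strip `(0,∞) × (0,1/2)`: any periodic solution taking values there is constant. -/
theorem stmt8 (w : ℝ → ℝ × ℝ)
    (hrange : ∀ τ : ℝ, 0 < (w τ).1 ∧ (w τ).2 ∈ Set.Ioo (0:ℝ) (1/2))
    (hODE : ∀ τ : ℝ, HasDerivAt w (dulacF (w τ)) τ)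
    (T : ℝ) (hT : 0 < T) (hper : ∀ τ : ℝ, w (τ + T) = w τ) :
    ∀ τ₁ τ₂ : ℝ, w τ₁ = w τ₂ := by
  have hπ : (0:ℝ) < Real.pi := Real.pi_pos
  -- the Lyapunov function along the solution
  set φ : ℝ → ℝ := fun τ => (w τ).1 - 3 / (56 * Real.pi) * Real.log (w τ).1
      - 1 / Real.pi * (w τ).2 - 2 / (7 * Real.pi) * Real.log (1 - 2 * (w τ).2) with hφdef
  -- its derivative along the flow
  have key : ∀ τ : ℝ, HasDerivAt φ
      (-((16 * Real.pi / 3 * ((w τ).1 - 3 / (56 * Real.pi)) ^ 2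
          + 2 / Real.pi * ((w τ).2 - 3 / 14) ^ 2) / (1 - 2 * (w τ).2))) τ := by
    intro τ
    have h1pos := (hrange τ).1
    have h2pos := (hrange τ).2.1
    have h2lt := (hrange τ).2.2
    have hden : (0:ℝ) < 1 - 2 * (w τ).2 := by linarith
    have h1 : HasDerivAt (fun τ => (w τ).1) (dulacF (w τ)).1 τ := (hODE τ).fst
    have h2 : HasDerivAt (fun τ => (w τ).2) (dulacF (w τ)).2 τ := (hODE τ).snd
    have hlog1 := h1.log (ne_of_gt h1pos)
    have hin : HasDerivAt (fun τ => 1 - 2 * (w τ).2) (0 - 2 * (dulacF (w τ)).2) τ :=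
      (hasDerivAt_const τ (1:ℝ)).sub (h2.const_mul 2)
    have hlog2 := hin.log (ne_of_gt hden)
    have hφ' := ((h1.sub (hlog1.const_mul (3 / (56 * Real.pi)))).sub
        (h2.const_mul (1 / Real.pi))).sub (hlog2.const_mul (2 / (7 * Real.pi)))
    have hEq : (dulacF (w τ)).1
          - 3 / (56 * Real.pi) * ((dulacF (w τ)).1 / (w τ).1)
          - 1 / Real.pi * (dulacF (w τ)).2
          - 2 / (7 * Real.pi) * ((0 - 2 * (dulacF (w τ)).2) / (1 - 2 * (w τ).2))
        = -((16 * Real.pi / 3 * ((w τ).1 - 3 / (56 * Real.pi)) ^ 2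
          + 2 / Real.pi * ((w τ).2 - 3 / 14) ^ 2) / (1 - 2 * (w τ).2)) := by
      simp only [dulacF]
      field_simp
      ring
    rw [← hEq]
    exact hφ'
  have hdiff : Differentiable ℝ φ := fun τ => (key τ).differentiableAt
  have hnonpos : ∀ τ : ℝ, deriv φ τ ≤ 0 := by
    intro τ
    rw [(key τ).deriv]
    have h2lt := (hrange τ).2.2
    have hden : (0:ℝ) < 1 - 2 * (w τ).2 := by linarith
    have hNn : (0:ℝ) ≤ 16 * Real.pi / 3 * ((w τ).1 - 3 / (56 * Real.pi)) ^ 2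
        + 2 / Real.pi * ((w τ).2 - 3 / 14) ^ 2 := by positivity
    have := div_nonneg hNn hden.le
    linarith
  have hanti : Antitone φ := antitone_of_deriv_nonpos hdiff hnonpos
  have hperφ : Function.Periodic φ T := fun τ => by simp only [hφdef, hper τ]
  -- periodic + antitone ⇒ constant
  have hconst : ∀ τ : ℝ, φ τ = φ 0 := by
    intro τ
    rcases le_total τ 0 with h | h
    · obtain ⟨n, hn⟩ := exists_nat_ge (-τ / T)
      have hnT : -τ ≤ n * T := by
        have := (div_le_iff₀ hT).mp hn
        linarith
      have h0le : (0:ℝ) ≤ τ + n * T := by linarith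
      have e1 : φ (τ + n * T) = φ τ := (hperφ.nat_mul n) τ
      have e2 : φ (τ + n * T) ≤ φ 0 := hanti h0le
      have e3 : φ 0 ≤ φ τ := hanti h
      linarith
    · obtain ⟨n, hn⟩ := exists_nat_ge (τ / T)
      have hnT : τ ≤ n * T := by
        have := (div_le_iff₀ hT).mp hn
        linarith
      have e1 : φ ((0:ℝ) + n * T) = φ 0 := (hperφ.nat_mul n) 0
      have e2 : φ (n * T) ≤ φ τ := hanti hnT
      have e3 : φ τ ≤ φ 0 := hanti h
      rw [zero_add] at e1
      linarith
  -- hence the orbital derivative vanishes identically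
  have hfix : ∀ τ : ℝ, w τ = (3 / (56 * Real.pi), 3 / 14) := by
    intro τ
    have hφc : φ = fun _ => φ 0 := funext hconst
    have h0 : HasDerivAt φ 0 τ := by rw [hφc]; exact hasDerivAt_const τ (φ 0)
    have hz := (key τ).unique h0
    have h2lt := (hrange τ).2.2
    have hden : (0:ℝ) < 1 - 2 * (w τ).2 := by linarith
    have hN : 16 * Real.pi / 3 * ((w τ).1 - 3 / (56 * Real.pi)) ^ 2
        + 2 / Real.pi * ((w τ).2 - 3 / 14) ^ 2 = 0 := by
      have h' := neg_eq_zero.mp hz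
      exact (div_eq_zero_iff.mp h').resolve_right (ne_of_gt hden)
    have t1 : (0:ℝ) ≤ 16 * Real.pi / 3 * ((w τ).1 - 3 / (56 * Real.pi)) ^ 2 := by positivity
    have t2 : (0:ℝ) ≤ 2 / Real.pi * ((w τ).2 - 3 / 14) ^ 2 := by positivity
    have hx : (w τ).1 - 3 / (56 * Real.pi) = 0 := by
      have h1 : 16 * Real.pi / 3 * ((w τ).1 - 3 / (56 * Real.pi)) ^ 2 = 0 := by linarith
      have h2 : ((w τ).1 - 3 / (56 * Real.pi)) ^ 2 = 0 := by
        rcases mul_eq_zero.mp h1 with h | h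
        · exact absurd h (by positivity)
        · exact h
      exact pow_eq_zero_iff (by norm_num) |>.mp h2
    have hy : (w τ).2 - 3 / 14 = 0 := by
      have h1 : 2 / Real.pi * ((w τ).2 - 3 / 14) ^ 2 = 0 := by linarith
      have h2 : ((w τ).2 - 3 / 14) ^ 2 = 0 := by
        rcases mul_eq_zero.mp h1 with h | h
        · exact absurd h (by positivity)
        · exact h
      exact pow_eq_zero_iff (by norm_num) |>.mp h2
    have e1 : (w τ).1 = 3 / (56 * Real.pi) := by linarith
    have e2 : (w τ).2 = 3 / 14 := by linarith
    exact Prod.ext e1 e2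
  intro τ₁ τ₂
  rw [hfix τ₁, hfix τ₂]

end
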